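/- Let M(G, V_k) be as below and let Ω be a free PMC of M(G, V_k) such that V_k \ Ω is partitioned into exactly one nonempty connected part P_1 (i.e., V_k \ Ω lies in a single component of M(G,V_k) \ Ω and V_k ∩ Ω ≠ ∅). Then the number of such free PMCs with this fixed partition {V_k ∩ Ω, P_1} of V_k is at most k. -/

import Mathlib

/-- The graph `H` with vertices of `Ω` made isolated (edges within `V \ Ω`). -/
def restrict {V : Type*} (H : SimpleGraph V) (Ω : Set V) : SimpleGraph V where
  Adj a b := H.Adj a b ∧ a ∉ Ω ∧ b ∉ Ω
  symm := ⟨fun _ _ ⟨h, ha, hb⟩ => ⟨h.symm, hb, ha⟩⟩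
  loopless := ⟨fun a h => H.loopless.irrefl a h.1⟩

/-- `C` is the vertex set of a connected component of `H \ Ω`. -/
def IsCompOf {V : Type*} (H : SimpleGraph V) (Ω C : Set V) : Prop :=
  ∃ a, a ∉ Ω ∧ C = {b | b ∉ Ω ∧ (restrict H Ω).Reachable a b}

/-- Neighborhood of a vertex set: vertices outside `C` adjacent to some vertex of `C`. -/
def nbhd {V : Type*} (H : SimpleGraph V) (C : Set V) : Set V :=
  {w | w ∉ C ∧ ∃ c ∈ C, H.Adj w c}

/-- `Ω` is a potential maximal clique of `H`. -/
def IsPMC {V : Type*} (H : SimpleGraph V) (Ω : Set V) : Prop :=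
  (∀ C, IsCompOf H Ω C → nbhd H C ≠ Ω) ∧
  (∀ u ∈ Ω, ∀ v ∈ Ω, u ≠ v →
    H.Adj u v ∨ ∃ C, IsCompOf H Ω C ∧ u ∈ nbhd H C ∧ v ∈ nbhd H C)

/-- A PMC is free if every vertex of `Ω` has a neighbor outside `Ω`. -/
def IsFree {V : Type*} (H : SimpleGraph V) (Ω : Set V) : Prop :=
  ∀ v ∈ Ω, ∃ w, w ∉ Ω ∧ H.Adj v w

/-- `G` together with a vertex `M_X` for each nonempty `X ⊆ Vk`, adjacent exactly to `X`. -/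
def Mgraph {V : Type*} (G : SimpleGraph V) (Vk : Set V) :
    SimpleGraph (V ⊕ {X : Set V // X ⊆ Vk ∧ X.Nonempty}) where
  Adj a b := match a, b with
    | .inl u, .inl w => G.Adj u w
    | .inl u, .inr X => u ∈ X.val
    | .inr X, .inl u => u ∈ X.val
    | .inr _, .inr _ => False
  symm := ⟨by rintro (u|X) (w|Y) h <;> simp_all <;> exact h.symm⟩
  loopless := ⟨by rintro (u|X) h <;> simp_all⟩

/-!
The vertices `M_X` together with `V \ V_k` form an independent set of `M(G, V_k)`, i.e. the
copy `S` of `V_k` is a vertex cover of `M(G, V_k)`. Let `C` be the component of `M \ Ω` containing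
`S \ Ω`. Every vertex of `Ω` outside `S` has, by freeness, a neighbour in `S \ Ω ⊆ C`, so it
lies in `N(C)`; since `N(C) ≠ Ω`, some `a ∈ S ∩ Ω` has no neighbour in `C`. This anchor `a`
determines `Ω`: a vertex `z ∉ S` lies in `Ω` iff it is adjacent to `a` and to `S \ Ω`. (If
`z ∈ Ω`, the PMC condition for the pair `a, z` can only be met by an edge, because the only
component `z` sees is `C`; conversely such a `z` outside `Ω` would put `a` into `N(C)`.)
Hence there are at most `|S ∩ Ω| ≤ k` such PMCs.
-/

namespace IsCompOf

variable {W : Type*} {H : SimpleGraph W} {Ω C C' : Set W} {x y : W}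

lemma notMem (hC : IsCompOf H Ω C) (hx : x ∈ C) : x ∉ Ω := by
  obtain ⟨a, -, rfl⟩ := hC
  exact hx.1

lemma mem_of_adj (hC : IsCompOf H Ω C) (hx : x ∈ C) (hy : y ∉ Ω) (hxy : H.Adj x y) :
    y ∈ C := by
  obtain ⟨a, -, rfl⟩ := hC
  exact ⟨hy, hx.2.trans (SimpleGraph.Adj.reachable (G := restrict H Ω) ⟨hxy, hx.1, hy⟩)⟩

lemma eq_of_mem (hC : IsCompOf H Ω C) (hC' : IsCompOf H Ω C') (hx : x ∈ C) (hx' : x ∈ C') :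
    C = C' := by
  obtain ⟨a, -, rfl⟩ := hC
  obtain ⟨a', -, rfl⟩ := hC'
  ext b
  exact ⟨fun ⟨hb, hr⟩ => ⟨hb, hx'.2.trans (hx.2.symm.trans hr)⟩,
    fun ⟨hb, hr⟩ => ⟨hb, hx.2.trans (hx'.2.symm.trans hr)⟩⟩

lemma nbhd_subset (hC : IsCompOf H Ω C) : nbhd H C ⊆ Ω := by
  rintro w ⟨hwC, c, hc, hwc⟩
  by_contra hw
  exact hwC (hC.mem_of_adj hc hw hwc.symm)

end IsCompOf

section VertexCover

variable {W : Type*} {H : SimpleGraph W} {S Ω C : Set W}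

lemma mem_of_adj_of_isIndepSet_compl (hS : H.IsIndepSet Sᶜ) {z w : W} (hz : z ∉ S)
    (hzw : H.Adj z w) : w ∈ S := by
  by_contra hw
  exact hS hz hw hzw.ne hzw

def anchoredSet (H : SimpleGraph W) (S T : Set W) (a : W) : Set W :=
  T ∪ {z | z ∉ S ∧ H.Adj a z ∧ ∃ s ∈ S \ T, H.Adj z s}

lemma mem_nbhd_of_mem_of_notMem_cover (hS : H.IsIndepSet Sᶜ) (hfree : IsFree H Ω)
    (hC : IsCompOf H Ω C) (hSC : S \ Ω ⊆ C) {z : W} (hzΩ : z ∈ Ω) (hzS : z ∉ S) :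
    z ∈ nbhd H C := by
  obtain ⟨w, hwΩ, hzw⟩ := hfree z hzΩ
  exact ⟨fun hzC => hC.notMem hzC hzΩ, w,
    hSC ⟨mem_of_adj_of_isIndepSet_compl hS hzS hzw, hwΩ⟩, hzw⟩

lemma exists_anchor (hS : H.IsIndepSet Sᶜ) (hΩ : IsPMC H Ω) (hfree : IsFree H Ω)
    (hC : IsCompOf H Ω C) (hSC : S \ Ω ⊆ C) : ∃ a ∈ S ∩ Ω, a ∉ nbhd H C := by
  obtain ⟨a, haΩ, haN⟩ : ∃ a ∈ Ω, a ∉ nbhd H C := by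
    by_contra! h
    exact hΩ.1 C hC (hC.nbhd_subset.antisymm h)
  refine ⟨a, ⟨?_, haΩ⟩, haN⟩
  by_contra haS
  exact haN (mem_nbhd_of_mem_of_notMem_cover hS hfree hC hSC haΩ haS)

lemma mem_iff_of_anchor (hS : H.IsIndepSet Sᶜ) (hΩ : IsPMC H Ω) (hfree : IsFree H Ω)
    (hC : IsCompOf H Ω C) (hSC : S \ Ω ⊆ C) {a : W} (ha : a ∈ S ∩ Ω) (haN : a ∉ nbhd H C)
    {z : W} (hzS : z ∉ S) : z ∈ Ω ↔ H.Adj a z ∧ ∃ s ∈ S \ Ω, H.Adj z s := by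
  have ha_nadj : ∀ c ∈ C, ¬ H.Adj a c := fun c hc hac =>
    haN ⟨fun haC => hC.notMem haC ha.2, c, hc, hac⟩
  constructor
  · intro hzΩ
    have haz : a ≠ z := fun h => hzS (h ▸ ha.1)
    refine ⟨?_, ?_⟩
    · rcases hΩ.2 a ha.2 z hzΩ haz with hadj | ⟨C', hC', ⟨-, c', hc', hac'⟩, ⟨-, c, hc, hzc⟩⟩
      · exact hadj
      · have hcC : c ∈ C := hSC ⟨mem_of_adj_of_isIndepSet_compl hS hzS hzc, hC'.notMem hc⟩
        obtain rfl := hC.eq_of_mem hC' hcC hc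
        exact absurd hac' (ha_nadj c' hc')
    · obtain ⟨w, hwΩ, hzw⟩ := hfree z hzΩ
      exact ⟨w, ⟨mem_of_adj_of_isIndepSet_compl hS hzS hzw, hwΩ⟩, hzw⟩
  · rintro ⟨haz, s, hs, hzs⟩
    by_contra hzΩ
    exact ha_nadj z (hC.mem_of_adj (hSC hs) hzΩ hzs.symm) haz

lemma eq_anchoredSet (hS : H.IsIndepSet Sᶜ) (hΩ : IsPMC H Ω) (hfree : IsFree H Ω)
    (hC : IsCompOf H Ω C) (hSC : S \ Ω ⊆ C) :
    ∃ a ∈ S ∩ Ω, Ω = anchoredSet H S (S ∩ Ω) a := by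
  obtain ⟨a, ha, haN⟩ := exists_anchor hS hΩ hfree hC hSC
  refine ⟨a, ha, Set.ext fun z => ?_⟩
  by_cases hzS : z ∈ S
  · simp [anchoredSet, hzS]
  · rw [mem_iff_of_anchor hS hΩ hfree hC hSC ha haN hzS]
    simp [anchoredSet, hzS]

theorem ncard_freePMC_le (hS : H.IsIndepSet Sᶜ) {T : Set W} (hT : T.Finite) :
    {Ω | IsPMC H Ω ∧ IsFree H Ω ∧ S ∩ Ω = T ∧ ∃ C, IsCompOf H Ω C ∧ S \ Ω ⊆ C}.ncard
      ≤ T.ncard := by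
  have hsub : {Ω | IsPMC H Ω ∧ IsFree H Ω ∧ S ∩ Ω = T ∧ ∃ C, IsCompOf H Ω C ∧ S \ Ω ⊆ C}
      ⊆ anchoredSet H S T '' T := by
    rintro Ω ⟨hΩ, hfree, rfl, C, hC, hSC⟩
    obtain ⟨a, ha, hΩa⟩ := eq_anchoredSet hS hΩ hfree hC hSC
    exact ⟨a, ha, hΩa.symm⟩
  exact (Set.ncard_le_ncard hsub (hT.image _)).trans (Set.ncard_image_le hT)

end VertexCover

lemma Mgraph.isIndepSet_compl_image_inl {V : Type*} {G : SimpleGraph V} {Vk : Set V}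
    (hvc : ∀ a b, G.Adj a b → a ∈ Vk ∨ b ∈ Vk) : (Mgraph G Vk).IsIndepSet (Sum.inl '' Vk)ᶜ := by
  rintro (u | X) hu (w | Y) hw - hadj
  · rcases hvc u w hadj with h | h
    · exact hu ⟨u, h, rfl⟩
    · exact hw ⟨w, h, rfl⟩
  · exact hu ⟨u, Y.2.1 hadj, rfl⟩
  · exact hw ⟨w, X.2.1 hadj, rfl⟩
  · exact hadj

theorem stmt12_general {V : Type*} [Fintype V] (G : SimpleGraph V) (Vk : Set V) (k : ℕ)
    (hcard : Vk.ncard = k)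
    (hvc : ∀ a b, G.Adj a b → a ∈ Vk ∨ b ∈ Vk)
    (A P1 : Set V) (hunion : A ∪ P1 = Vk) :
    {Ω : Set (V ⊕ {X : Set V // X ⊆ Vk ∧ X.Nonempty}) |
      IsPMC (Mgraph G Vk) Ω ∧ IsFree (Mgraph G Vk) Ω ∧
      (∀ v ∈ Vk, Sum.inl v ∈ Ω ↔ v ∈ A) ∧
      ∃ C, IsCompOf (Mgraph G Vk) Ω C ∧ ∀ v ∈ P1, Sum.inl v ∈ C}.ncard ≤ k := by
  have hAVk : A ⊆ Vk := hunion ▸ Set.subset_union_left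
  have hsub : {Ω | IsPMC (Mgraph G Vk) Ω ∧ IsFree (Mgraph G Vk) Ω ∧
        (∀ v ∈ Vk, Sum.inl v ∈ Ω ↔ v ∈ A) ∧
        ∃ C, IsCompOf (Mgraph G Vk) Ω C ∧ ∀ v ∈ P1, Sum.inl v ∈ C} ⊆
      {Ω | IsPMC (Mgraph G Vk) Ω ∧ IsFree (Mgraph G Vk) Ω ∧ Sum.inl '' Vk ∩ Ω = Sum.inl '' A ∧
        ∃ C, IsCompOf (Mgraph G Vk) Ω C ∧ Sum.inl '' Vk \ Ω ⊆ C} := by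
    rintro Ω ⟨hΩ, hfree, hA, C, hC, hP1⟩
    refine ⟨hΩ, hfree, Set.ext fun z => ⟨?_, ?_⟩, C, hC, ?_⟩
    · rintro ⟨⟨v, hv, rfl⟩, hvΩ⟩
      exact ⟨v, (hA v hv).1 hvΩ, rfl⟩
    · rintro ⟨v, hv, rfl⟩
      exact ⟨⟨v, hAVk hv, rfl⟩, (hA v (hAVk hv)).2 hv⟩
    · rintro _ ⟨⟨v, hv, rfl⟩, hvΩ⟩
      exact hP1 v (((hunion ▸ hv : v ∈ A ∪ P1)).resolve_left fun hvA => hvΩ ((hA v hv).2 hvA))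
  calc _ ≤ _ := Set.ncard_le_ncard hsub (Set.toFinite _)
    _ ≤ (Sum.inl '' A).ncard :=
      ncard_freePMC_le (Mgraph.isIndepSet_compl_image_inl hvc) (Set.toFinite _)
    _ = A.ncard := Set.ncard_image_of_injective _ Sum.inl_injective
    _ ≤ k := hcard ▸ Set.ncard_le_ncard hAVk

theorem stmt12 {V : Type*} [Fintype V] (G : SimpleGraph V) (Vk : Set V) (k : ℕ)
    (hcard : Vk.ncard = k)
    (hvc : ∀ a b, G.Adj a b → a ∈ Vk ∨ b ∈ Vk)
    (A P1 : Set V) (hA : A.Nonempty) (hP1 : P1.Nonempty)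
    (hdisj : Disjoint A P1) (hunion : A ∪ P1 = Vk) :
    {Ω : Set (V ⊕ {X : Set V // X ⊆ Vk ∧ X.Nonempty}) |
      IsPMC (Mgraph G Vk) Ω ∧ IsFree (Mgraph G Vk) Ω ∧
      (∀ v ∈ Vk, Sum.inl v ∈ Ω ↔ v ∈ A) ∧
      ∃ C, IsCompOf (Mgraph G Vk) Ω C ∧ ∀ v ∈ P1, Sum.inl v ∈ C}.ncard ≤ k :=
  stmt12_general G Vk k hcard hvc A P1 hunion
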